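/- arXiv:1707.00841 — 5 statements merged into one kernel-verified Lean document; each statement's English description precedes it below -/
import Mathlib

section
/- Every solution of the functional differential equation x'(t) + m·x(−t) = 0 on ℝ, with m a nonzero real constant, is of the form u(t) = a·(cos(m t) − sin(m t)) for some real constant a. -/
/-! With `y t := x (-t)` the equation becomes the planar rotation system `x' = -m y`, `y' = m x`.
Rotating `(x t, y t)` back by the angle `m t` gives a pair of functions with zero derivative, so
`x t = x 0 cos (m t) - y 0 sin (m t)`, and `y 0 = x 0` gives the claim. -/

open Real

section RotationSystem

variable {m : ℝ} {u v : ℝ → ℝ}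

lemma hasDerivAt_comp_neg_of_hasDerivAt_eq_neg_mul (hu : ∀ t, HasDerivAt u (-m * u (-t)) t)
    (t : ℝ) : HasDerivAt (fun s => u (-s)) (m * u t) t := by
  refine ((hu (-t)).comp t (hasDerivAt_neg t)).congr_deriv ?_
  rw [neg_neg]
  ring

lemma const_of_hasDerivAt_zero {f : ℝ → ℝ} (hf : ∀ t, HasDerivAt f 0 t) (t : ℝ) : f t = f 0 :=
  is_const_of_deriv_eq_zero (fun s => (hf s).differentiableAt) (fun s => (hf s).deriv) t 0

variable (hu : ∀ t, HasDerivAt u (-m * v t) t) (hv : ∀ t, HasDerivAt v (m * u t) t)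
include hu hv

lemma hasDerivAt_rotate_fst (t : ℝ) :
    HasDerivAt (fun s => u s * cos (m * s) + v s * sin (m * s)) 0 t := by
  have hc := (hasDerivAt_const_mul (x := t) m).cos
  have hs := (hasDerivAt_const_mul (x := t) m).sin
  refine (((hu t).mul hc).add ((hv t).mul hs)).congr_deriv ?_
  ring

lemma hasDerivAt_rotate_snd (t : ℝ) :
    HasDerivAt (fun s => v s * cos (m * s) - u s * sin (m * s)) 0 t := by
  have hc := (hasDerivAt_const_mul (x := t) m).cos
  have hs := (hasDerivAt_const_mul (x := t) m).sin
  refine (((hv t).mul hc).sub ((hu t).mul hs)).congr_deriv ?_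
  ring

lemma eq_cos_sub_sin_of_rotation_system (t : ℝ) :
    u t = u 0 * cos (m * t) - v 0 * sin (m * t) := by
  have hp := const_of_hasDerivAt_zero (hasDerivAt_rotate_fst hu hv) t
  have hq := const_of_hasDerivAt_zero (hasDerivAt_rotate_snd hu hv) t
  simp only [mul_zero, cos_zero, sin_zero, mul_one, add_zero, sub_zero] at hp hq
  rw [← hp, ← hq]
  linear_combination (-u t) * sin_sq_add_cos_sq (m * t)

end RotationSystem

theorem stmt_0_general (m : ℝ) (x : ℝ → ℝ) (hx : Differentiable ℝ x)
    (heq : ∀ t : ℝ, deriv x t + m * x (-t) = 0) :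
    ∃ a : ℝ, ∀ t : ℝ, x t = a * (Real.cos (m * t) - Real.sin (m * t)) := by
  have hx' : ∀ t, HasDerivAt x (-m * x (-t)) t := fun t => by
    simpa [eq_neg_add_of_add_eq (heq t)] using (hx t).hasDerivAt
  refine ⟨x 0, fun t => ?_⟩
  have := eq_cos_sub_sin_of_rotation_system hx'
    (hasDerivAt_comp_neg_of_hasDerivAt_eq_neg_mul hx') t
  rw [this, neg_zero]
  ring

theorem stmt_0 (m : ℝ) (hm : m ≠ 0) (x : ℝ → ℝ) (hx : Differentiable ℝ x)
    (heq : ∀ t : ℝ, deriv x t + m * x (-t) = 0) :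
    ∃ a : ℝ, ∀ t : ℝ, x t = a * (Real.cos (m * t) - Real.sin (m * t)) :=
  stmt_0_general m x hx heq
end

section
/- Define the antiperiodic Green's function with reflection Ĥ(t,s) by 2cos(mT)·Ĥ(t,s) = sin(m(−T+s+t)) + cos(m(−T−s+t)) if t>|s|; = sin(m(−T+s+t)) − cos(m(−T+s−t)) if |t|<s; = sin(m(−T−s−t)) + cos(m(−T−s+t)) if −|t|>s; = sin(m(−T−s−t)) − cos(m(−T+s−t)) if t<−|s|. Then Ĥ(t,s) = Ĥ(−s,−t) for all t,s ∈ [−T,T] with |t| ≠ |s|. -/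
/-!
The reflection `(t, s) ↦ (-s, -t)` exchanges the region `|s| < t` with `s < -|t|` and the region
`|t| < s` with `t < -|s|`, and on each pair of regions the two defining formulas agree after the
substitution, argument by argument; the diagonals `|t| = |s|` are exactly the points in none of the
four regions.
-/

lemma lt_or_lt_of_abs_ne_abs {t s : ℝ} (h : |t| ≠ |s|) :
    |s| < t ∨ |t| < s ∨ s < -|t| ∨ t < -|s| := by
  contrapose! h
  obtain ⟨hst, hts, hts', hst'⟩ := h
  exact le_antisymm (abs_le.2 ⟨hst', hst⟩) (abs_le.2 ⟨hts', hts⟩)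

theorem stmt_10_general (m T : ℝ) (hc : Real.cos (m * T) ≠ 0)
    (Hh : ℝ → ℝ → ℝ)
    (h1 : ∀ t s, |s| < t → 2 * Real.cos (m * T) * Hh t s =
        Real.sin (m * (-T + s + t)) + Real.cos (m * (-T - s + t)))
    (h2 : ∀ t s, |t| < s → 2 * Real.cos (m * T) * Hh t s =
        Real.sin (m * (-T + s + t)) - Real.cos (m * (-T + s - t)))
    (h3 : ∀ t s, s < -|t| → 2 * Real.cos (m * T) * Hh t s =
        Real.sin (m * (-T - s - t)) + Real.cos (m * (-T - s + t)))
    (h4 : ∀ t s, t < -|s| → 2 * Real.cos (m * T) * Hh t s =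
        Real.sin (m * (-T - s - t)) - Real.cos (m * (-T + s - t)))
    :
    ∀ t ∈ Set.Icc (-T) T, ∀ s ∈ Set.Icc (-T) T, |t| ≠ |s| → Hh t s = Hh (-s) (-t) := by
  intro t _ s _ hts
  refine mul_left_cancel₀ (mul_ne_zero two_ne_zero hc) ?_
  rcases lt_or_lt_of_abs_ne_abs hts with h | h | h | h
  · rw [h1 t s h, h3 (-s) (-t) (by rwa [abs_neg, neg_lt_neg_iff])]
    ring_nf
  · rw [h2 t s h, h4 (-s) (-t) (by rwa [abs_neg, neg_lt_neg_iff])]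
    ring_nf
  · rw [h3 t s h, h1 (-s) (-t) (by rw [abs_neg]; linarith)]
    ring_nf
  · rw [h4 t s h, h2 (-s) (-t) (by rw [abs_neg]; linarith)]
    ring_nf

theorem stmt_10 (m T : ℝ) (hT : 0 < T) (hc : Real.cos (m * T) ≠ 0)
    (Hh : ℝ → ℝ → ℝ)
    (h1 : ∀ t s, |s| < t → 2 * Real.cos (m * T) * Hh t s =
        Real.sin (m * (-T + s + t)) + Real.cos (m * (-T - s + t)))
    (h2 : ∀ t s, |t| < s → 2 * Real.cos (m * T) * Hh t s =
        Real.sin (m * (-T + s + t)) - Real.cos (m * (-T + s - t)))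
    (h3 : ∀ t s, s < -|t| → 2 * Real.cos (m * T) * Hh t s =
        Real.sin (m * (-T - s - t)) + Real.cos (m * (-T - s + t)))
    (h4 : ∀ t s, t < -|s| → 2 * Real.cos (m * T) * Hh t s =
        Real.sin (m * (-T - s - t)) - Real.cos (m * (-T + s - t)))
    :
    ∀ t ∈ Set.Icc (-T) T, ∀ s ∈ Set.Icc (-T) T, |t| ≠ |s| → Hh t s = Hh (-s) (-t) :=
  stmt_10_general m T hc Hh h1 h2 h3 h4
end

section
/- With Ĥ the antiperiodic Green's function with reflection, the jump across the diagonal equals 1: for every t ∈ (−T,T), lim_{s→t⁻} Ĥ(t,s) − lim_{s→t⁺} Ĥ(t,s) = 1. -/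
/-!
On each side of the diagonal `s = t`, `2 cos(mT) Ĥ(t, ·)` agrees near `t` with a continuous
expression. At `s = t` both one-sided expressions have the same sine term `sin(m(2|t| - T))`,
while their cosine terms are `± cos(mT)`; the jump is therefore `2 cos(mT) / (2 cos(mT)) = 1`.
-/

open Filter Topology Real

lemma tendsto_of_eventually_mul_eq {c t : ℝ} {g F : ℝ → ℝ} {l : Filter ℝ} (hc : c ≠ 0)
    (hF : ContinuousAt F t) (hl : l ≤ 𝓝 t) (h : ∀ᶠ s in l, c * g s = F s) :
    Tendsto g l (𝓝 (F t / c)) := by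
  refine ((hF.tendsto.mono_left hl).div_const c).congr' ?_
  filter_upwards [h] with s hs
  rw [← hs, mul_div_cancel_left₀ _ hc]

lemma tendsto_nhdsLT_diagonal {m T t : ℝ} {Hh : ℝ → ℝ → ℝ} (hc : cos (m * T) ≠ 0)
    (h1 : ∀ t s, |s| < t → 2 * cos (m * T) * Hh t s =
        sin (m * (-T + s + t)) + cos (m * (-T - s + t)))
    (h3 : ∀ t s, s < -|t| → 2 * cos (m * T) * Hh t s =
        sin (m * (-T - s - t)) + cos (m * (-T - s + t))) :
    Tendsto (Hh t) (𝓝[<] t)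
      (𝓝 ((sin (m * (2 * |t| - T)) + cos (m * T)) / (2 * cos (m * T)))) := by
  have hc2 : 2 * cos (m * T) ≠ 0 := mul_ne_zero two_ne_zero hc
  rcases le_or_gt t 0 with ht | ht
  · have heq : ∀ᶠ s in 𝓝[<] t, 2 * cos (m * T) * Hh t s =
        sin (m * (-T - s - t)) + cos (m * (-T - s + t)) := by
      filter_upwards [self_mem_nhdsWithin] with s hs
      exact h3 t s (by rw [abs_of_nonpos ht, neg_neg]; exact hs)
    convert tendsto_of_eventually_mul_eq hc2 (by fun_prop) nhdsWithin_le_nhds heq using 3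
    rw [abs_of_nonpos ht, show m * (-T - t + t) = -(m * T) by ring, cos_neg]
    ring_nf
  · have heq : ∀ᶠ s in 𝓝[<] t, 2 * cos (m * T) * Hh t s =
        sin (m * (-T + s + t)) + cos (m * (-T - s + t)) := by
      filter_upwards [Ioo_mem_nhdsLT (show -t < t by linarith)] with s hs
      exact h1 t s (abs_lt.mpr hs)
    convert tendsto_of_eventually_mul_eq hc2 (by fun_prop) nhdsWithin_le_nhds heq using 3
    rw [abs_of_pos ht, show m * (-T - t + t) = -(m * T) by ring, cos_neg]
    ring_nf

lemma tendsto_nhdsGT_diagonal {m T t : ℝ} {Hh : ℝ → ℝ → ℝ} (hc : cos (m * T) ≠ 0)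
    (h2 : ∀ t s, |t| < s → 2 * cos (m * T) * Hh t s =
        sin (m * (-T + s + t)) - cos (m * (-T + s - t)))
    (h4 : ∀ t s, t < -|s| → 2 * cos (m * T) * Hh t s =
        sin (m * (-T - s - t)) - cos (m * (-T + s - t))) :
    Tendsto (Hh t) (𝓝[>] t)
      (𝓝 ((sin (m * (2 * |t| - T)) - cos (m * T)) / (2 * cos (m * T)))) := by
  have hc2 : 2 * cos (m * T) ≠ 0 := mul_ne_zero two_ne_zero hc
  rcases le_or_gt 0 t with ht | ht
  · have heq : ∀ᶠ s in 𝓝[>] t, 2 * cos (m * T) * Hh t s =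
        sin (m * (-T + s + t)) - cos (m * (-T + s - t)) := by
      filter_upwards [self_mem_nhdsWithin] with s hs
      exact h2 t s (by rw [abs_of_nonneg ht]; exact hs)
    convert tendsto_of_eventually_mul_eq hc2 (by fun_prop) nhdsWithin_le_nhds heq using 3
    rw [abs_of_nonneg ht, show m * (-T + t - t) = -(m * T) by ring, cos_neg]
    ring_nf
  · have heq : ∀ᶠ s in 𝓝[>] t, 2 * cos (m * T) * Hh t s =
        sin (m * (-T - s - t)) - cos (m * (-T + s - t)) := by
      filter_upwards [Ioo_mem_nhdsGT (show t < -t by linarith)] with s hs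
      exact h4 t s (lt_neg.mpr (abs_lt.mpr ⟨by linarith [hs.1], hs.2⟩))
    convert tendsto_of_eventually_mul_eq hc2 (by fun_prop) nhdsWithin_le_nhds heq using 3
    rw [abs_of_neg ht, show m * (-T + t - t) = -(m * T) by ring, cos_neg]
    ring_nf

theorem stmt_12_general (m T : ℝ) (hc : Real.cos (m * T) ≠ 0)
    (Hh : ℝ → ℝ → ℝ)
    (h1 : ∀ t s, |s| < t → 2 * Real.cos (m * T) * Hh t s =
        Real.sin (m * (-T + s + t)) + Real.cos (m * (-T - s + t)))
    (h2 : ∀ t s, |t| < s → 2 * Real.cos (m * T) * Hh t s =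
        Real.sin (m * (-T + s + t)) - Real.cos (m * (-T + s - t)))
    (h3 : ∀ t s, s < -|t| → 2 * Real.cos (m * T) * Hh t s =
        Real.sin (m * (-T - s - t)) + Real.cos (m * (-T - s + t)))
    (h4 : ∀ t s, t < -|s| → 2 * Real.cos (m * T) * Hh t s =
        Real.sin (m * (-T - s - t)) - Real.cos (m * (-T + s - t)))
    :
    ∀ t ∈ Set.Ioo (-T) T, ∃ L₁ L₂ : ℝ,
      Filter.Tendsto (fun s => Hh t s) (nhdsWithin t (Set.Iio t)) (nhds L₁) ∧
      Filter.Tendsto (fun s => Hh t s) (nhdsWithin t (Set.Ioi t)) (nhds L₂) ∧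
      L₁ - L₂ = 1 := by
  intro t _
  refine ⟨_, _, tendsto_nhdsLT_diagonal hc h1 h3, tendsto_nhdsGT_diagonal hc h2 h4, ?_⟩
  field_simp
  ring

theorem stmt_12 (m T : ℝ) (hT : 0 < T) (hc : Real.cos (m * T) ≠ 0)
    (Hh : ℝ → ℝ → ℝ)
    (h1 : ∀ t s, |s| < t → 2 * Real.cos (m * T) * Hh t s =
        Real.sin (m * (-T + s + t)) + Real.cos (m * (-T - s + t)))
    (h2 : ∀ t s, |t| < s → 2 * Real.cos (m * T) * Hh t s =
        Real.sin (m * (-T + s + t)) - Real.cos (m * (-T + s - t)))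
    (h3 : ∀ t s, s < -|t| → 2 * Real.cos (m * T) * Hh t s =
        Real.sin (m * (-T - s - t)) + Real.cos (m * (-T - s + t)))
    (h4 : ∀ t s, t < -|s| → 2 * Real.cos (m * T) * Hh t s =
        Real.sin (m * (-T - s - t)) - Real.cos (m * (-T + s - t)))
    :
    ∀ t ∈ Set.Ioo (-T) T, ∃ L₁ L₂ : ℝ,
      Filter.Tendsto (fun s => Hh t s) (nhdsWithin t (Set.Iio t)) (nhds L₁) ∧
      Filter.Tendsto (fun s => Hh t s) (nhdsWithin t (Set.Ioi t)) (nhds L₂) ∧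
      L₁ - L₂ = 1 :=
  stmt_12_general m T hc Hh h1 h2 h3 h4
end

section
/- With Ĥ the antiperiodic Green's function with reflection, for every fixed s ∈ (−T,T) and every t ∈ (−T,T) with |t| ≠ |s|, the reflection equation ∂Ĥ/∂t(t,s) + m·Ĥ(−t,s) = 0 holds. -/
/-!
On each of the four regions cut out by `|t| = |s|`, the function `τ ↦ 2 cos(mT) Ĥ(τ, s)` is a sum
of two sinusoids, and differentiating it gives `-m` times the formula valid at the mirror point `-τ`
(the regions `t > |s|` and `t < -|s|` are swapped by `τ ↦ -τ`, the other two are preserved).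
Since the regions are open, the derivative of `Ĥ(·, s)` is that of the local formula.
-/

open Real Set Filter

section ReflectedDerivatives

variable (m a b t : ℝ)

-- The derivatives are written with `x - -t`, `x + -t` so as to match the formulas at `-t` verbatim.

theorem hasDerivAt_sin_add_add_cos_add :
    HasDerivAt (fun τ => sin (m * (a + τ)) + cos (m * (b + τ)))
      (-m * (sin (m * (b - -t)) - cos (m * (a - -t)))) t := by
  refine ((((hasDerivAt_id t).const_add a).const_mul m).sin.add
    (((hasDerivAt_id t).const_add b).const_mul m).cos).congr_deriv ?_
  simp only [id, sub_neg_eq_add]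
  ring

theorem hasDerivAt_sin_sub_sub_cos_sub :
    HasDerivAt (fun τ => sin (m * (b - τ)) - cos (m * (a - τ)))
      (-m * (sin (m * (a + -t)) + cos (m * (b + -t)))) t := by
  refine ((((hasDerivAt_id t).const_sub b).const_mul m).sin.sub
    (((hasDerivAt_id t).const_sub a).const_mul m).cos).congr_deriv ?_
  simp only [id, ← sub_eq_add_neg]
  ring

theorem hasDerivAt_sin_add_sub_cos_sub :
    HasDerivAt (fun τ => sin (m * (a + τ)) - cos (m * (a - τ)))
      (-m * (sin (m * (a + -t)) - cos (m * (a - -t)))) t := by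
  refine ((((hasDerivAt_id t).const_add a).const_mul m).sin.sub
    (((hasDerivAt_id t).const_sub a).const_mul m).cos).congr_deriv ?_
  simp only [id, sub_neg_eq_add, ← sub_eq_add_neg]
  ring

theorem hasDerivAt_sin_sub_add_cos_add :
    HasDerivAt (fun τ => sin (m * (b - τ)) + cos (m * (b + τ)))
      (-m * (sin (m * (b - -t)) + cos (m * (b + -t)))) t := by
  refine ((((hasDerivAt_id t).const_sub b).const_mul m).sin.add
    (((hasDerivAt_id t).const_add b).const_mul m).cos).congr_deriv ?_
  simp only [id, sub_neg_eq_add, ← sub_eq_add_neg]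
  ring

end ReflectedDerivatives

theorem deriv_add_mul_comp_neg_eq_zero_of_eqOn {G u : ℝ → ℝ} {U : Set ℝ} {m t w : ℝ}
    (hU : IsOpen U) (ht : t ∈ U) (hGu : EqOn G u U) (hu : HasDerivAt u (-m * w) t)
    (hw : G (-t) = w) : deriv G t + m * G (-t) = 0 := by
  rw [(hu.congr_of_eventuallyEq (eventuallyEq_of_mem (hU.mem_nhds ht) hGu)).deriv, hw]
  ring

theorem deriv_add_mul_comp_neg_eq_zero_of_const_mul {F : ℝ → ℝ} {c m t : ℝ} (hc : c ≠ 0)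
    (h : deriv (fun τ => c * F τ) t + m * (c * F (-t)) = 0) :
    deriv F t + m * F (-t) = 0 := by
  rw [deriv_const_mul_field'] at h
  exact (mul_eq_zero.mp (by linear_combination h)).resolve_left hc

theorem stmt_13_general (m T : ℝ) (hc : Real.cos (m * T) ≠ 0)
    (Hh : ℝ → ℝ → ℝ)
    (h1 : ∀ t s, |s| < t → 2 * Real.cos (m * T) * Hh t s =
        Real.sin (m * (-T + s + t)) + Real.cos (m * (-T - s + t)))
    (h2 : ∀ t s, |t| < s → 2 * Real.cos (m * T) * Hh t s =
        Real.sin (m * (-T + s + t)) - Real.cos (m * (-T + s - t)))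
    (h3 : ∀ t s, s < -|t| → 2 * Real.cos (m * T) * Hh t s =
        Real.sin (m * (-T - s - t)) + Real.cos (m * (-T - s + t)))
    (h4 : ∀ t s, t < -|s| → 2 * Real.cos (m * T) * Hh t s =
        Real.sin (m * (-T - s - t)) - Real.cos (m * (-T + s - t)))
    :
    ∀ s ∈ Set.Ioo (-T) T, ∀ t ∈ Set.Ioo (-T) T, |t| ≠ |s| →
      deriv (fun τ => Hh τ s) t + m * Hh (-t) s = 0 := by
  intro s _ t _ hts
  refine deriv_add_mul_comp_neg_eq_zero_of_const_mul (mul_ne_zero two_ne_zero hc) ?_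
  rcases hts.lt_or_gt with hlt | hgt
  · rcases lt_abs.mp hlt with hB | hC
    · exact deriv_add_mul_comp_neg_eq_zero_of_eqOn (isOpen_lt continuous_abs continuous_const)
        hB (fun τ hτ => h2 τ s hτ) (hasDerivAt_sin_add_sub_cos_sub m _ t)
        (h2 (-t) s (by rwa [abs_neg]))
    · exact deriv_add_mul_comp_neg_eq_zero_of_eqOn
        (isOpen_lt continuous_const continuous_abs.neg) (show s < -|t| by linarith)
        (fun τ hτ => h3 τ s hτ) (hasDerivAt_sin_sub_add_cos_add m _ t)
        (h3 (-t) s (by rw [abs_neg]; linarith))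
  · rcases lt_abs.mp hgt with hA | hD
    · exact deriv_add_mul_comp_neg_eq_zero_of_eqOn (isOpen_lt continuous_const continuous_id)
        hA (fun τ hτ => h1 τ s hτ) (hasDerivAt_sin_add_add_cos_add m _ _ t)
        (h4 (-t) s (by linarith))
    · exact deriv_add_mul_comp_neg_eq_zero_of_eqOn (isOpen_lt continuous_id continuous_const)
        (show t < -|s| by linarith) (fun τ hτ => h4 τ s hτ)
        (hasDerivAt_sin_sub_sub_cos_sub m _ _ t) (h1 (-t) s (by linarith))

theorem stmt_13 (m T : ℝ) (hT : 0 < T) (hm : m ≠ 0) (hc : Real.cos (m * T) ≠ 0)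
    (Hh : ℝ → ℝ → ℝ)
    (h1 : ∀ t s, |s| < t → 2 * Real.cos (m * T) * Hh t s =
        Real.sin (m * (-T + s + t)) + Real.cos (m * (-T - s + t)))
    (h2 : ∀ t s, |t| < s → 2 * Real.cos (m * T) * Hh t s =
        Real.sin (m * (-T + s + t)) - Real.cos (m * (-T + s - t)))
    (h3 : ∀ t s, s < -|t| → 2 * Real.cos (m * T) * Hh t s =
        Real.sin (m * (-T - s - t)) + Real.cos (m * (-T - s + t)))
    (h4 : ∀ t s, t < -|s| → 2 * Real.cos (m * T) * Hh t s =
        Real.sin (m * (-T - s - t)) - Real.cos (m * (-T + s - t)))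
    :
    ∀ s ∈ Set.Ioo (-T) T, ∀ t ∈ Set.Ioo (-T) T, |t| ≠ |s| →
      deriv (fun τ => Hh τ s) t + m * Hh (-t) s = 0 :=
  stmt_13_general m T hc Hh h1 h2 h3 h4
end

section
/- The function f(α) = (1/(2α))·(1 + sec α)/(1 + csc α) is strictly decreasing on (0, π/4), with limit 1 as α → 0⁺ and limit 2/π as α → (π/4)⁻. -/
open Real Set Filter Topology

/-!
Writing `s = sin α`, `c = cos α` and using `s² + c² = 1`, the derivative of `f` has the sign of
`α (2 - s - c) - s c`. The bounds `s > α - α³/6` and `c ≥ 1 - α²/2` reduce its negativity to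
`α (14 + 2α - α²) < 12`, which holds for `α ≤ π/4 < 0.79`.
At `0`, `f = sinc · (1 + sec)/(2 (1 + sin))` extends continuously by `1`; at `π/4`, `f` is
continuous with value `2/π`.
-/

theorem mul_two_sub_sin_sub_cos_lt_sin_mul_cos {x : ℝ} (hx₀ : 0 < x) (hx : x ≤ π / 4) :
    x * (2 - sin x - cos x) < sin x * cos x := by
  have hx1 : x < 0.79 := by linarith [pi_lt_d2]
  have hs := sin_gt_sub_cube hx₀
  have hc := one_sub_sq_div_two_le_cos (x := x)
  have hsL : 0 < x - x ^ 3 / 6 := by nlinarith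
  have hcL : 0 < 1 - x ^ 2 / 2 := by nlinarith
  calc x * (2 - sin x - cos x) < x * (2 - (x - x ^ 3 / 6) - (1 - x ^ 2 / 2)) := by
        nlinarith
    _ ≤ (x - x ^ 3 / 6) * (1 - x ^ 2 / 2) := by
        nlinarith [mul_pos hx₀ hx₀, mul_pos (mul_pos hx₀ hx₀) hx₀]
    _ < sin x * cos x := mul_lt_mul hs hc hcL (by linarith)

noncomputable def secCscRatio (α : ℝ) : ℝ := (1 + 1 / cos α) / (2 * α * (1 + 1 / sin α))

theorem hasDerivAt_secCscRatio {x : ℝ} (hx : x ≠ 0) (hs : sin x ≠ 0) (hc : cos x ≠ 0)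
    (hs₁ : 1 + sin x ≠ 0) :
    HasDerivAt secCscRatio ((1 + cos x) * (x * (2 - sin x - cos x) - sin x * cos x) /
      (2 * x ^ 2 * cos x ^ 2 * (1 + sin x))) x := by
  have hnum : HasDerivAt (fun α => 1 + 1 / cos α) (sin x / cos x ^ 2) x := by
    simpa [one_div, neg_div] using ((hasDerivAt_cos x).inv hc).const_add 1
  have hcsc : HasDerivAt (fun α => 1 + 1 / sin α) (-cos x / sin x ^ 2) x := by
    simpa [one_div, neg_div] using ((hasDerivAt_sin x).inv hs).const_add 1
  have hden : HasDerivAt (fun α => 2 * α * (1 + 1 / sin α))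
      (2 * 1 * (1 + 1 / sin x) + 2 * x * (-cos x / sin x ^ 2)) x :=
    ((hasDerivAt_id' x).const_mul 2).mul hcsc
  have hs₁' : sin x + 1 ≠ 0 := by rwa [add_comm]
  have hden₀ : 2 * x * (1 + 1 / sin x) ≠ 0 := by
    rw [one_add_div hs]; exact mul_ne_zero (mul_ne_zero two_ne_zero hx) (div_ne_zero hs₁' hs)
  refine (hnum.div hden hden₀).congr_deriv ?_
  field_simp
  linear_combination x * (1 + sin x) * (sin x + cos x + 2) * sin_sq_add_cos_sq x

theorem sin_pos_and_cos_pos_of_mem_Ioo {x : ℝ} (hx : x ∈ Ioo 0 (π / 2)) : 0 < sin x ∧ 0 < cos x :=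
  ⟨sin_pos_of_pos_of_lt_pi hx.1 (by linarith [pi_pos, hx.2]),
    cos_pos_of_mem_Ioo ⟨by linarith [pi_pos, hx.1], hx.2⟩⟩

theorem strictAntiOn_secCscRatio : StrictAntiOn secCscRatio (Ioo 0 (π / 4)) := by
  have hderiv : ∀ x ∈ Ioo 0 (π / 4), HasDerivAt secCscRatio ((1 + cos x) *
      (x * (2 - sin x - cos x) - sin x * cos x) / (2 * x ^ 2 * cos x ^ 2 * (1 + sin x))) x := by
    intro x hx
    obtain ⟨hs, hc⟩ := sin_pos_and_cos_pos_of_mem_Ioo ⟨hx.1, by linarith [hx.2, pi_pos]⟩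
    exact hasDerivAt_secCscRatio hx.1.ne' hs.ne' hc.ne' (by positivity)
  refine strictAntiOn_of_hasDerivWithinAt_neg (convex_Ioo 0 (π / 4))
    (fun x hx => (hderiv x hx).continuousAt.continuousWithinAt)
    (fun x hx => (hderiv x (interior_subset hx)).hasDerivWithinAt) fun x hx => ?_
  rw [interior_Ioo] at hx
  obtain ⟨hs, hc⟩ := sin_pos_and_cos_pos_of_mem_Ioo ⟨hx.1, by linarith [hx.2, pi_pos]⟩
  have hnum : (1 + cos x) * (x * (2 - sin x - cos x) - sin x * cos x) < 0 :=
    mul_neg_of_pos_of_neg (by positivity)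
      (sub_neg.2 (mul_two_sub_sin_sub_cos_lt_sin_mul_cos hx.1 hx.2.le))
  have hx₀ : 0 < x := hx.1
  have hden : 0 < 2 * x ^ 2 * cos x ^ 2 * (1 + sin x) := by positivity
  exact div_neg_of_neg_of_pos hnum hden

theorem secCscRatio_eq_sinc_mul {x : ℝ} (hx : x ≠ 0) (hs : sin x ≠ 0) :
    secCscRatio x = sinc x * ((1 + 1 / cos x) / (2 * (1 + sin x))) := by
  rw [secCscRatio, sinc_of_ne_zero hx, one_add_div hs]
  field_simp
  ring

theorem tendsto_secCscRatio_zero : Tendsto secCscRatio (𝓝[>] 0) (𝓝 1) := by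
  have hcont : ContinuousAt (fun x => sinc x * ((1 + 1 / cos x) / (2 * (1 + sin x)))) 0 := by
    have := continuous_sinc.continuousAt (x := 0)
    fun_prop (disch := simp)
  have heq : (fun x => sinc x * ((1 + 1 / cos x) / (2 * (1 + sin x)))) =ᶠ[𝓝[>] 0]
      secCscRatio := by
    filter_upwards [Ioo_mem_nhdsGT (show (0 : ℝ) < π / 2 by positivity)] with x hx
    exact (secCscRatio_eq_sinc_mul hx.1.ne' (sin_pos_and_cos_pos_of_mem_Ioo hx).1.ne').symm
  have hlim := (hcont.tendsto.mono_left nhdsWithin_le_nhds).congr' heq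
  norm_num [sinc_zero] at hlim
  exact hlim

theorem secCscRatio_pi_div_four : secCscRatio (π / 4) = 2 / π := by
  rw [secCscRatio, cos_pi_div_four, sin_pi_div_four]
  have : 0 < √2 := by positivity
  field_simp
  ring

theorem tendsto_secCscRatio_pi_div_four : Tendsto secCscRatio (𝓝[<] (π / 4)) (𝓝 (2 / π)) := by
  have hcont : ContinuousAt secCscRatio (π / 4) := by
    have := continuous_sin.continuousAt (x := π / 4)
    have := continuous_cos.continuousAt (x := π / 4)
    unfold secCscRatio
    fun_prop (disch := simp only [cos_pi_div_four, sin_pi_div_four]; positivity)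
  rw [← secCscRatio_pi_div_four]
  exact hcont.tendsto.mono_left nhdsWithin_le_nhds

theorem stmt_18 (f : ℝ → ℝ)
    (hf : ∀ α, f α = (1 + 1 / Real.cos α) / (2 * α * (1 + 1 / Real.sin α))) :
    StrictAntiOn f (Set.Ioo 0 (Real.pi / 4)) ∧
    Filter.Tendsto f (nhdsWithin 0 (Set.Ioi 0)) (nhds 1) ∧
    Filter.Tendsto f (nhdsWithin (Real.pi / 4) (Set.Iio (Real.pi / 4)))
      (nhds (2 / Real.pi)) := by
  obtain rfl : f = secCscRatio := funext hf
  exact ⟨strictAntiOn_secCscRatio, tendsto_secCscRatio_zero, tendsto_secCscRatio_pi_div_four⟩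
end
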